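/- If 𝔫 is a maximal ideal of S containing none of the generators σ, ᾱ_1, …, ᾱ_8, then the localizations R_{𝔫∩R} and S_𝔫 coincide (as subrings of the fraction field of S). In particular, there exists a maximal ideal 𝔫 of S with R_{𝔫∩R} = S_𝔫, i.e., the noetherian locus U_{S/R} is nonempty. -/

import Mathlib

/-!
Since `σ² ∈ I ⊆ R` and `σ² ∉ 𝔫` for a prime `𝔫 ∌ σ`, every fraction `a / b` with `b ∉ 𝔫`
can be rewritten as `aσ² / bσ²`, whose numerator and denominator lie in `R`.
The maximal ideal of the point `(1, …, 1)` does not contain `σ`.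
-/

open MvPolynomial

noncomputable section

variable (k : Type*) [Field k]
variable [IsAlgClosed k]

/-- The polynomial ring in 12 variables `x₁..x₄, y₁..y₄, z₁..z₄`:
a variable is indexed by `(t, i)` with `t : Fin 3` (`0 ↦ x`, `1 ↦ y`, `2 ↦ z`)
and `i : Fin 4` the index modulo 4. -/
abbrev B := MvPolynomial (Fin 3 × Fin 4) k

/-- `x_i` (indices modulo 4). -/
def xv (i : ℕ) : B k := X (0, Fin.ofNat 4 i)
/-- `y_i` (indices modulo 4). -/
def yv (i : ℕ) : B k := X (1, Fin.ofNat 4 i)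
/-- `z_i` (indices modulo 4). -/
def zv (i : ℕ) : B k := X (2, Fin.ofNat 4 i)

/-- `σ = x₁x₂x₃x₄ · y₁y₂y₃y₄ · z₁z₂z₃z₄`, the product of all 12 variables. -/
def sig : B k := ∏ p : Fin 3 × Fin 4, X p

/-- The substitution `x_i ↦ x_{i+1}, y_i ↦ y_{i+1}, z_i ↦ z_{i+1}` (indices mod 4). -/
def rot : B k →ₐ[k] B k := aeval (fun p => X (p.1, p.2 + 1))

/-- `ᾱ₁ = x₂x₃²x₄ · y₁y₃y₄² · z₁z₂²z₃`. -/
def a1 : B k :=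
  xv k 2 * xv k 3 ^ 2 * xv k 4 * yv k 1 * yv k 3 * yv k 4 ^ 2 * zv k 1 * zv k 2 ^ 2 * zv k 3

/-- `ᾱ₂ = (x₁x₄y₁y₄z₁z₄)²`. -/
def a2 : B k := (xv k 1 * xv k 4 * yv k 1 * yv k 4 * zv k 1 * zv k 4) ^ 2

/-- `ᾱ_j` for `j ≥ 1`: `ᾱ₁`, `ᾱ₂` are as above and `ᾱ_{j+2}` is obtained from `ᾱ_j`
by applying the substitution `rot`. -/
def alpha (j : ℕ) : B k := (⇑(rot k))^[(j - 1) / 2] (if j % 2 = 1 then a1 k else a2 k)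
/-- The cycle algebra `S = k[σ, ᾱ₁, …, ᾱ₈] ⊆ B`. -/
def Scal : Subalgebra k (B k) := Algebra.adjoin k (insert (sig k) (alpha k '' Set.Icc 1 8))
/-- Reduction of an index to `{1, …, 8}`, implementing "indices modulo 8". -/
def idx (j : ℕ) : ℕ := (j - 1) % 8 + 1

lemma idx_mem (j : ℕ) : idx j ∈ Set.Icc 1 8 :=
  ⟨Nat.le_add_left 1 _, Nat.succ_le_of_lt (Nat.mod_lt _ (by norm_num))⟩

/-- `σ` as an element of `S`. -/
def σS : ↥(Scal k) := ⟨sig k, Algebra.subset_adjoin (Set.mem_insert _ _)⟩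

/-- `ᾱ_j` (indices modulo 8) as an element of `S`. -/
def αS (j : ℕ) : ↥(Scal k) :=
  ⟨alpha k (idx j), Algebra.subset_adjoin (Set.mem_insert_of_mem _ ⟨idx j, idx_mem j, rfl⟩)⟩
/-- The ideal `I = (σ², ᾱ_jᾱ_{j+1}ᾱ_{j+2} | j ∈ {1, …, 8})` of `S`, indices modulo 8. -/
def Ic : Ideal ↥(Scal k) :=
  Ideal.span (insert (σS k ^ 2)
    {p | ∃ j ∈ Finset.Icc 1 8, p = αS k j * αS k (j + 1) * αS k (j + 2)})

/-- The subset `R = k[σ] + I` of `S`. -/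
def Rset : Set ↥(Scal k) :=
  {r | ∃ p ∈ Algebra.adjoin k {σS k}, ∃ s ∈ Ic k, r = p + s}
/-- The center `R = k[σ] + I`, as a `k`-subalgebra of `S`. -/
def Rsub : Subalgebra k ↥(Scal k) where
  carrier := Rset k
  add_mem' := by
    rintro a b ⟨p₁, hp₁, s₁, hs₁, rfl⟩ ⟨p₂, hp₂, s₂, hs₂, rfl⟩
    exact ⟨p₁ + p₂, add_mem hp₁ hp₂, s₁ + s₂, (Ic k).add_mem hs₁ hs₂, add_add_add_comm _ _ _ _⟩
  mul_mem' := by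
    rintro a b ⟨p₁, hp₁, s₁, hs₁, rfl⟩ ⟨p₂, hp₂, s₂, hs₂, rfl⟩
    exact ⟨p₁ * p₂, mul_mem hp₁ hp₂,
      p₁ * s₂ + s₁ * p₂ + s₁ * s₂,
      (Ic k).add_mem ((Ic k).add_mem ((Ic k).mul_mem_left _ hs₂) ((Ic k).mul_mem_right _ hs₁))
        ((Ic k).mul_mem_left _ hs₂),
      by ring⟩
  algebraMap_mem' := fun c =>
    ⟨algebraMap k _ c, Subalgebra.algebraMap_mem _ c, 0, (Ic k).zero_mem, (add_zero _).symm⟩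
/-- The localization `S_𝔫`, as a subset of the fraction field of `S`. -/
def locS (n : Ideal ↥(Scal k)) : Set (FractionRing ↥(Scal k)) :=
  {x | ∃ a b : ↥(Scal k), b ∉ n ∧
    x * algebraMap ↥(Scal k) (FractionRing ↥(Scal k)) b
      = algebraMap ↥(Scal k) (FractionRing ↥(Scal k)) a}

/-- The localization `R_{𝔫 ∩ R}`, as a subset of the fraction field of `S`. -/
def locR (n : Ideal ↥(Scal k)) : Set (FractionRing ↥(Scal k)) :=
  {x | ∃ a b : ↥(Scal k), a ∈ Rsub k ∧ b ∈ Rsub k ∧ b ∉ n ∧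
    x * algebraMap ↥(Scal k) (FractionRing ↥(Scal k)) b
      = algebraMap ↥(Scal k) (FractionRing ↥(Scal k)) a}

theorem exists_mul_eq_of_mem_ideal_notMem {A K : Type*} [CommRing A] [CommRing K] (f : A →+* K)
    {I n : Ideal A} (hn : n.IsPrime) {t : A} (htI : t ∈ I) (htn : t ∉ n) {x : K} {a b : A}
    (hb : b ∉ n) (h : x * f b = f a) :
    ∃ a' b', a' ∈ I ∧ b' ∈ I ∧ b' ∉ n ∧ x * f b' = f a' :=
  ⟨a * t, b * t, I.mul_mem_left a htI, I.mul_mem_left b htI, hn.mul_notMem hb htn, by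
    rw [map_mul, map_mul, ← mul_assoc, h]⟩

omit [IsAlgClosed k] in
theorem mem_Rsub_of_mem_Ic {s : Scal k} (hs : s ∈ Ic k) : s ∈ Rsub k :=
  ⟨0, zero_mem _, s, hs, (zero_add s).symm⟩

omit [IsAlgClosed k] in
theorem σS_sq_mem_Ic : σS k ^ 2 ∈ Ic k :=
  Ideal.subset_span (Set.mem_insert _ _)

omit [IsAlgClosed k] in
theorem locR_eq_locS_of_σS_notMem (n : Ideal (Scal k)) (hn : n.IsPrime) (hσ : σS k ∉ n) :
    locR k n = locS k n := by
  refine Set.Subset.antisymm (fun x ⟨a, b, _, _, hb, h⟩ => ⟨a, b, hb, h⟩) fun x ⟨a, b, hb, h⟩ => ?_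
  obtain ⟨a', b', ha', hb', hbn, h'⟩ := exists_mul_eq_of_mem_ideal_notMem _ hn (σS_sq_mem_Ic k)
    (fun h => hσ (hn.mem_of_pow_mem 2 h)) hb h
  exact ⟨a', b', mem_Rsub_of_mem_Ic k ha', mem_Rsub_of_mem_Ic k hb', hbn, h'⟩

/-- If `𝔫` is a maximal ideal of `S` containing none of the generators `σ, ᾱ₁, …, ᾱ₈`, then
the localizations `R_{𝔫 ∩ R}` and `S_𝔫` coincide as subrings of the fraction field of `S`.
In particular there is a maximal ideal `𝔫` of `S` with `R_{𝔫 ∩ R} = S_𝔫`, i.e. the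
noetherian locus `U_{S/R}` is nonempty. -/
theorem stmt8 :
    (∀ n : Ideal ↥(Scal k), n.IsMaximal → σS k ∉ n → (∀ j ∈ Finset.Icc 1 8, αS k j ∉ n) →
      locR k n = locS k n) ∧
    ∃ n : Ideal ↥(Scal k), n.IsMaximal ∧ locR k n = locS k n := by
  refine ⟨fun n hn hσ _ => locR_eq_locS_of_σS_notMem k n hn.isPrime hσ, ?_⟩
  let φ : Scal k →ₐ[k] k := (aeval fun _ => 1).comp (Scal k).val
  have hφ : Function.Surjective φ := fun c => ⟨algebraMap k _ c, φ.commutes c⟩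
  have hmax : (RingHom.ker φ).IsMaximal := RingHom.ker_isMaximal_of_surjective φ hφ
  refine ⟨RingHom.ker φ, hmax, locR_eq_locS_of_σS_notMem k _ hmax.isPrime ?_⟩
  simp [RingHom.mem_ker, φ, σS, sig]

end
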